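/- arXiv:math/0212064 — 4 statements merged into one kernel-verified Lean document; each statement's English description precedes it below -/
import Mathlib

section
/- Let f : G → H be a graph homomorphism between simple graphs. If G contains a cycle of odd length n, then H contains a cycle of odd length at most n. -/
/-!
The image of the cycle under `f` is an odd closed walk of length `n` in `H`, and a shortest odd
closed walk is a cycle: otherwise it has a repeated vertex and splits
there into two shorter closed walks whose lengths add up to an odd number, so one of them is odd.
-/

namespace SimpleGraph.Walk

variable {V : Type*} {G : SimpleGraph V}

theorem exists_closed_walk_of_not_isPath :
    ∀ {u v : V} (p : G.Walk u v), ¬p.IsPath →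
      ∃ (x : V) (q : G.Walk x x) (r : G.Walk u v), 0 < q.length ∧ q.length + r.length = p.length
  | _, _, nil, hp => absurd IsPath.nil hp
  | u, _, cons h p, hp => by
    classical
    by_cases hu : u ∈ p.support
    · refine ⟨u, cons h (p.takeUntil u hu), p.dropUntil u hu, by simp, ?_⟩
      have hsplit := congr_arg length (p.take_spec hu)
      rw [length_append] at hsplit
      simp only [length_cons]
      omega
    · obtain ⟨x, q, r, hq, hlen⟩ :=
        exists_closed_walk_of_not_isPath p fun hp' => hp (hp'.cons hu)
      exact ⟨x, q, cons h r, hq, by simp only [length_cons]; omega⟩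

theorem exists_closed_walks_of_not_isCycle {u : V} (c : G.Walk u u) (hc : ¬c.IsCycle)
    (hzero : c.length ≠ 0) (h2 : c.length ≠ 2) :
    ∃ (x : V) (q : G.Walk x x) (r : G.Walk u u),
      0 < q.length ∧ 0 < r.length ∧ q.length + r.length = c.length := by
  cases c with
  | nil => exact absurd rfl hzero
  | @cons _ v _ h p =>
    rw [cons_isCycle_iff] at hc
    by_cases hp : p.IsPath
    · have hedge : s(v, u) ∈ p.edges := Sym2.eq_swap ▸ not_not.mp fun he => hc ⟨hp, he⟩
      exact absurd (by simp [hp.length_eq_one_of_mem_edges hedge]) h2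
    · obtain ⟨x, q, r, hq, hlen⟩ := exists_closed_walk_of_not_isPath p hp
      exact ⟨x, q, cons h r, hq, by simp, by simp only [length_cons]; omega⟩

theorem exists_shorter_odd_closed_walk_of_not_isCycle {u : V} (c : G.Walk u u)
    (hc : ¬c.IsCycle) (hodd : Odd c.length) :
    ∃ (x : V) (d : G.Walk x x), Odd d.length ∧ d.length < c.length := by
  obtain ⟨x, q, r, hq, hr, hlen⟩ :=
    exists_closed_walks_of_not_isCycle c hc hodd.pos.ne'
      fun h2 => absurd (h2 ▸ hodd) (by decide)
  rw [← hlen] at hodd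
  rcases Nat.even_or_odd q.length with hqeven | hqodd
  · exact ⟨u, r, (Nat.odd_add'.mp hodd).mpr hqeven, by omega⟩
  · exact ⟨x, q, hqodd, by omega⟩

theorem exists_odd_cycle_of_odd_length {u : V} (c : G.Walk u u) (hodd : Odd c.length) :
    ∃ (x : V) (d : G.Walk x x), d.IsCycle ∧ Odd d.length ∧ d.length ≤ c.length := by
  induction h : c.length using Nat.strong_induction_on generalizing u with
  | _ n ih =>
    by_cases hc : c.IsCycle
    · exact ⟨u, c, hc, hodd, h.le⟩
    obtain ⟨x, d, hdodd, hdlt⟩ := exists_shorter_odd_closed_walk_of_not_isCycle c hc hodd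
    obtain ⟨y, e, he, heodd, hele⟩ := ih d.length (h ▸ hdlt) d hdodd rfl
    exact ⟨y, e, he, heodd, by omega⟩

end SimpleGraph.Walk

theorem hom_odd_cycle_general {V W : Type*} {G : SimpleGraph V} {H : SimpleGraph W}
    (f : G →g H) {v : V} (w : G.Walk v v) (hodd : Odd w.length) :
    ∃ (u : W) (d : H.Walk u u), d.IsCycle ∧ Odd d.length ∧ d.length ≤ w.length := by
  simpa only [SimpleGraph.Walk.length_map] using
    (w.map f).exists_odd_cycle_of_odd_length (by rwa [SimpleGraph.Walk.length_map])

/-- If there is a graph homomorphism `f : G →g H` and `G` contains a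
cycle of odd length `n`, then `H` contains a cycle of odd length at most `n`. -/
theorem hom_odd_cycle {V W : Type*} {G : SimpleGraph V} {H : SimpleGraph W}
    (f : G →g H) {v : V} (w : G.Walk v v) (hc : w.IsCycle) (hodd : Odd w.length) :
    ∃ (u : W) (d : H.Walk u u), d.IsCycle ∧ Odd d.length ∧ d.length ≤ w.length :=
  hom_odd_cycle_general f w hodd
end

section
/- Let f : ℕ → ℕ, let X be a simple graph on a vertex set V, and let c be a function assigning to every edge of X a natural number. For n ∈ ℕ let X_n be the spanning subgraph of X consisting of the edges e with c(e) = n, and for r ∈ ℕ let Y_r be the spanning subgraph consisting of the edges e with c(e) ≥ r. Suppose that (a) for every n the graph X_n contains no cycle, and (b) for every r the graph Y_r contains no cycle of odd length at most f(r). Then for every r, every induced subgraph of X on at most f(r) vertices admits a proper coloring with 2^{r+1} colors. -/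
/-!
The edges of colour `n < r` form a forest, and the edges of colour `≥ r` inside `S` contain no
odd cycle, since a cycle in `S` has at most `|S| ≤ f r` edges; so each of these `r + 1` graphs is
bipartite. The edges of the induced subgraph are covered by them, and the product of their
2-colourings is a proper colouring with `2 ^ (r + 1)` colours.
-/

namespace SimpleGraph

variable {V : Type*} {G : SimpleGraph V}

namespace Walk

theorem exists_isCycle_odd_length_of_odd_length {v : V} (w : G.Walk v v) (hw : Odd w.length) :
    ∃ (u : V) (c : G.Walk u u), c.IsCycle ∧ Odd c.length := by
  induction hn : w.length using Nat.strong_induction_on generalizing v with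
  | _ n ih =>
  cases w with
  | nil => simp at hw
  | @cons _ y _ h p =>
    by_cases hp : p.IsPath
    · refine ⟨v, cons h p,
        isCycle_iff_isPath_tail_and_le_length.mpr ⟨by simpa using hp, ?_⟩, hw⟩
      have : ¬ p.Nil := fun hnil => G.loopless.irrefl v (hnil.eq ▸ h)
      have := p.not_nil_iff_lt_length.mp this
      rw [length_cons, Nat.odd_add_one, Nat.not_odd_iff_even] at hw
      obtain ⟨k, hk⟩ := hw
      rw [length_cons]
      omega
    -- Cut a closed subwalk `c` out of `p`; of `c` and the remaining closed walk, one is odd.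
    · obtain ⟨x, c, ⟨q₁, q₂, rfl⟩, hc⟩ :
          ∃ (x : V) (c : G.Walk x x), c.IsSubwalk p ∧ ¬ c.Nil := by
        simpa using mt isPath_iff_isSubwalk_imp_nil.mpr hp
      have hc : 0 < c.length := c.not_nil_iff_lt_length.mp hc
      have hlen : (cons h ((q₁.append c).append q₂)).length =
          (cons h (q₁.append q₂)).length + c.length := by
        simp only [length_cons, length_append]; omega
      rw [hlen] at hw hn
      rw [Nat.odd_add] at hw
      rcases Nat.even_or_odd c.length with he | ho
      · exact ih _ (by omega) _ (hw.mpr he) rfl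
      · exact ih _ (by simp only [length_cons, length_append] at hn ⊢; omega) _ ho rfl

theorem IsCycle.length_le_card [Fintype V] {v : V} {c : G.Walk v v} (hc : c.IsCycle) :
    c.length ≤ Fintype.card V := by
  simpa using hc.support_nodup.length_le_card

end Walk

theorem colorable_two_of_forall_isCycle_even
    (h : ∀ (v : V) (c : G.Walk v v), c.IsCycle → Even c.length) : G.Colorable 2 :=
  two_colorable_iff_forall_loop_even.mpr fun _ w => Nat.not_odd_iff_even.mp fun hw => by
    obtain ⟨u, c, hc, hodd⟩ := w.exists_isCycle_odd_length_of_odd_length hw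
    exact Nat.not_odd_iff_even.mpr (h u c hc) hodd

theorem colorable_two_induce_of_card_lt_length_of_odd_isCycle (s : Finset V)
    (h : ∀ (v : V) (c : G.Walk v v), c.IsCycle → Odd c.length → s.card < c.length) :
    (G.induce s).Colorable 2 :=
  colorable_two_of_forall_isCycle_even fun v c hc => Nat.not_odd_iff_even.mp fun hodd => by
    have hlong := h _ (c.map (Embedding.induce (s : Set V)).toHom)
      (hc.map Subtype.val_injective) (by rwa [Walk.length_map])
    have hshort := hc.length_le_card
    simp only [Walk.length_map, Finset.coe_sort_coe, Fintype.card_coe] at hlong hshort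
    omega

theorem colorable_iSup {ι : Type*} [Fintype ι] {H : ι → SimpleGraph V} {n : ℕ}
    (hH : ∀ i, (H i).Colorable n) : (⨆ i, H i).Colorable (n ^ Fintype.card ι) := by
  classical
  let C := fun i => (hH i).some
  let product : (⨆ i, H i).Coloring (ι → Fin n) :=
    Coloring.mk (fun v i => C i v) fun hab heq => by
      obtain ⟨i, hi⟩ := iSup_adj.mp hab
      exact (C i).valid hi (congrFun heq i)
  simpa using product.colorable

end SimpleGraph

open SimpleGraph

/-- Let `c` assign a natural number to each edge of `X`.  Let `Xn n`
be the spanning subgraph of edges with color `n` and `Yr r` the spanning subgraph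
of edges with color `≥ r`.  If every `Xn n` is acyclic and `Yr r` has no odd cycle
of length at most `f r`, then every induced subgraph of `X` on at most `f r`
vertices is `2 ^ (r + 1)`-colorable. -/
theorem induced_subgraph_colorable {V : Type*} (f : ℕ → ℕ) (X : SimpleGraph V)
    (c : Sym2 V → ℕ)
    (Xn : ℕ → SimpleGraph V)
    (hXn : ∀ n x y, (Xn n).Adj x y ↔ X.Adj x y ∧ c s(x, y) = n)
    (Yr : ℕ → SimpleGraph V)
    (hYr : ∀ r x y, (Yr r).Adj x y ↔ X.Adj x y ∧ r ≤ c s(x, y))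
    (hacyclic : ∀ n (v : V) (w : (Xn n).Walk v v), ¬ w.IsCycle)
    (hodd : ∀ r (v : V) (w : (Yr r).Walk v v),
      w.IsCycle → Odd w.length → f r < w.length) :
    ∀ (r : ℕ) (S : Finset V), S.card ≤ f r →
      (X.induce (S : Set V)).Colorable (2 ^ (r + 1)) := by
  intro r S hS
  let H : Option (Fin r) → SimpleGraph S := fun i =>
    i.elim ((Yr r).induce S) fun n => (Xn n).induce S
  have hcover : X.induce S ≤ ⨆ i, H i := by
    intro a b hab
    rw [iSup_adj]
    by_cases hr : r ≤ c s(a.1, b.1)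
    · exact ⟨none, (hYr r a b).mpr ⟨hab, hr⟩⟩
    · exact ⟨some ⟨c s(a.1, b.1), by omega⟩, (hXn _ a b).mpr ⟨hab, rfl⟩⟩
  have hbipartite : ∀ i, (H i).Colorable 2
    | none => colorable_two_induce_of_card_lt_length_of_odd_isCycle S
        fun v w hcycle hlength => hS.trans_lt (hodd r v w hcycle hlength)
    | some n => (IsAcyclic.induce (fun v w => hacyclic n v w) S).colorable_two
  simpa [pow_succ'] using (colorable_iSup hbipartite).mono_left hcover
end

section
/- Let X be a simple graph on a vertex type W and let Z be a simple graph on a vertex type S. Suppose that for every finite subset s of S there exists a simple graph T on s such that (i) any two vertices of s adjacent in Z are adjacent in T, and (ii) T is isomorphic to an induced subgraph of X, i.e., there is an injection φ : s → W such that two vertices u, v ∈ s are adjacent in T iff φ(u) and φ(v) are adjacent in X. Then there exists a simple graph Z' on S with Z ≤ Z' (every edge of Z is an edge of Z') such that every finite induced subgraph of Z' is isomorphic to an induced subgraph of X, i.e., for every finite s ⊆ S there is an injection φ : s → W with u, v ∈ s adjacent in Z' iff φ(u), φ(v) adjacent in X. -/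
/-!
A compactness argument. Choose the witnesses `T t` for all finite `t ⊆ S`, view them as graphs
on `S`, and let `Z'` be their limit along an ultrafilter on finite subsets of `S` refining
`atTop`: `u, v` are adjacent in `Z'` iff they are adjacent in `T t` for `U`-almost every `t`.
Edges of `Z` lie in every `T t ⊇ {u, v}`, so `Z ≤ Z'`. Since `U` decides each of the finitely
many pairs of a finite `s`, `Z'` agrees on `s` with `T t` for some `t ⊇ s`, and the embedding
of `T t` into `X` restricts to `s`.
-/

open Filter

namespace SimpleGraph

variable {V ι : Type*}

def ultrafilterLimit (U : Ultrafilter ι) (G : ι → SimpleGraph V) : SimpleGraph V where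
  Adj u v := ∀ᶠ i in U, (G i).Adj u v
  symm := ⟨fun _ _ h => h.mono fun _ hi => hi.symm⟩
  loopless := ⟨fun u h => h.exists.elim fun i hi => (G i).loopless.irrefl u hi⟩

theorem eventually_adj_iff_ultrafilterLimit_adj (U : Ultrafilter ι) (G : ι → SimpleGraph V)
    (s : Finset V) :
    ∀ᶠ i in U, ∀ u ∈ s, ∀ v ∈ s, ((G i).Adj u v ↔ (ultrafilterLimit U G).Adj u v) := by
  simp only [eventually_all_finset]
  intro u _ v _
  rcases U.em fun i => (G i).Adj u v with h | h
  · exact h.mono fun _ hi => iff_of_true hi h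
  · exact h.mono fun _ hi => iff_of_false hi (Ultrafilter.eventually_not.mp h)

end SimpleGraph

open SimpleGraph in
/-- If for every finite `s ⊆ S` there is a graph `T` on `s`
containing all edges of `Z` restricted to `s` and isomorphic to an induced
subgraph of `X`, then there is a graph `Z' ≥ Z` on `S` all of whose finite
induced subgraphs are isomorphic to induced subgraphs of `X`. -/
theorem exists_supergraph_with_induced_subgraphs {W S : Type*}
    (X : SimpleGraph W) (Z : SimpleGraph S)
    (happ : ∀ s : Finset S, ∃ T : SimpleGraph {x // x ∈ s},
      (∀ u v : {x // x ∈ s}, Z.Adj u v → T.Adj u v) ∧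
      ∃ φ : {x // x ∈ s} → W, Function.Injective φ ∧
        ∀ u v : {x // x ∈ s}, T.Adj u v ↔ X.Adj (φ u) (φ v)) :
    ∃ Z' : SimpleGraph S, Z ≤ Z' ∧
      ∀ s : Finset S, ∃ φ : {x // x ∈ s} → W, Function.Injective φ ∧
        ∀ u v : {x // x ∈ s}, Z'.Adj u v ↔ X.Adj (φ u) (φ v) := by
  choose T hZT φ hφ hTX using happ
  let G : Finset S → SimpleGraph S := fun t => (T t).map (Function.Embedding.subtype _)
  let U : Ultrafilter (Finset S) := .of atTop
  have hU : ∀ s : Finset S, ∀ᶠ t in (U : Filter (Finset S)), s ⊆ t :=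
    fun s => Ultrafilter.of_le atTop (eventually_ge_atTop s)
  refine ⟨ultrafilterLimit U G, fun u v huv => ?_, fun s => ?_⟩
  · classical
    filter_upwards [hU {u, v}] with t ht
    exact (map_adj_apply (a := ⟨u, ht (by simp)⟩) (b := ⟨v, ht (by simp)⟩)).mpr (hZT t _ _ huv)
  · obtain ⟨t, hst, hagree⟩ :=
      ((hU s).and (eventually_adj_iff_ultrafilterLimit_adj U G s)).exists
    let incl : {x // x ∈ s} → {x // x ∈ t} := fun x => ⟨x, hst x.2⟩
    have hincl : Function.Injective incl := fun x y h => Subtype.ext (congrArg Subtype.val h :)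
    refine ⟨φ t ∘ incl, (hφ t).comp hincl, fun u v => ?_⟩
    rw [← hagree u u.2 v v.2]
    exact (map_adj_apply (a := incl u) (b := incl v)).trans (hTX t _ _)
end

section
/- Let S be a type and suppose that for every finite subset s of S we are given a nonempty set A_s of simple graphs on the vertex set s, such that the family is closed under restriction: if T ∈ A_s and s' ⊆ s, then the induced restriction of T to s' belongs to A_{s'}. Then there exists a simple graph Z' on S such that for every finite subset s of S the induced restriction of Z' to s belongs to A_s. -/
/-!
Restricting admissible graphs along inclusions of finite sets makes the sets `A s` an inverse
system of nonempty finite sets over the cofiltered poset of finite subsets of `S`, so it has a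
section (König / Tychonoff): a compatible choice `v s ∈ A s`. Compatible graphs on all finite
subsets glue to one graph on `S`, since any two of them agree on the common vertices, as both
are restrictions of the graph chosen on the union.
-/

open CategoryTheory

namespace SimpleGraph

variable {S : Type*}

abbrev restrictOfSubset {s s' : Finset S} (h : s' ⊆ s) (G : SimpleGraph s) : SimpleGraph s' :=
  G.comap fun x => ⟨x.1, h x.2⟩

def restrictionSystem (A : ∀ s : Finset S, Set (SimpleGraph s))
    (hclosed : ∀ (s : Finset S), ∀ T ∈ A s, ∀ (s' : Finset S) (hss : s' ⊆ s),
      restrictOfSubset hss T ∈ A s') :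
    (Finset S)ᵒᵖ ⥤ Type _ where
  obj s := A s.unop
  map f := TypeCat.ofHom fun T => ⟨restrictOfSubset (leOfHom f.unop) T.1, hclosed _ T.1 T.2 _ _⟩

theorem exists_compatible_mem (A : ∀ s : Finset S, Set (SimpleGraph s))
    (hne : ∀ s : Finset S, (A s).Nonempty)
    (hclosed : ∀ (s : Finset S), ∀ T ∈ A s, ∀ (s' : Finset S) (hss : s' ⊆ s),
      restrictOfSubset hss T ∈ A s') :
    ∃ v : ∀ s : Finset S, SimpleGraph s, (∀ s, v s ∈ A s) ∧
      ∀ (s s' : Finset S) (h : s' ⊆ s), restrictOfSubset h (v s) = v s' := by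
  let F := restrictionSystem A hclosed
  have : ∀ s, Finite (F.obj s) := fun s => Subtype.finite
  have : ∀ s, Nonempty (F.obj s) := fun s => (hne s.unop).to_subtype
  obtain ⟨u, hu⟩ := nonempty_sections_of_finite_cofiltered_system F
  exact ⟨fun s => (u (.op s)).1, fun s => (u (.op s)).2,
    fun s s' h => congrArg Subtype.val (hu (homOfLE h).op)⟩

theorem adj_iff_adj_of_compatible {v : ∀ s : Finset S, SimpleGraph s}
    (hv : ∀ (s s' : Finset S) (h : s' ⊆ s), restrictOfSubset h (v s) = v s')
    {s t : Finset S} {x y : S} (hxs : x ∈ s) (hys : y ∈ s) (hxt : x ∈ t) (hyt : y ∈ t) :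
    (v s).Adj ⟨x, hxs⟩ ⟨y, hys⟩ ↔ (v t).Adj ⟨x, hxt⟩ ⟨y, hyt⟩ := by
  classical
  rw [← hv (s ∪ t) s Finset.subset_union_left, ← hv (s ∪ t) t Finset.subset_union_right]
  rfl

def glue (v : ∀ s : Finset S, SimpleGraph s) : SimpleGraph S where
  Adj x y := ∃ (t : Finset S) (hx : x ∈ t) (hy : y ∈ t), (v t).Adj ⟨x, hx⟩ ⟨y, hy⟩
  symm := ⟨fun _ _ ⟨t, hx, hy, h⟩ => ⟨t, hy, hx, h.symm⟩⟩
  loopless := ⟨fun _ ⟨_, _, _, h⟩ => h.ne rfl⟩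

theorem comap_glue_of_compatible {v : ∀ s : Finset S, SimpleGraph s}
    (hv : ∀ (s s' : Finset S) (h : s' ⊆ s), restrictOfSubset h (v s) = v s') (s : Finset S) :
    (glue v).comap (fun x : s => (x : S)) = v s := by
  ext ⟨x, hx⟩ ⟨y, hy⟩
  rw [comap_adj]
  exact ⟨fun ⟨_, hxt, hyt, h⟩ => (adj_iff_adj_of_compatible hv hx hy hxt hyt).mpr h,
    fun h => ⟨s, hx, hy, h⟩⟩

end SimpleGraph

/-- Rado selection principle for graphs: Suppose that for every
finite `s ⊆ S` we are given a nonempty set `A s` of graphs on `s`, closed under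
induced restriction.  Then there is a graph `Z'` on `S` whose restriction to each
finite `s` lies in `A s`. -/
theorem rado_selection_graphs {S : Type*}
    (A : ∀ s : Finset S, Set (SimpleGraph {x // x ∈ s}))
    (hne : ∀ s : Finset S, (A s).Nonempty)
    (hclosed : ∀ (s : Finset S), ∀ T ∈ A s, ∀ (s' : Finset S) (hss : s' ⊆ s),
      T.comap (fun x : {y // y ∈ s'} => (⟨x.1, hss x.2⟩ : {y // y ∈ s})) ∈ A s') :
    ∃ Z' : SimpleGraph S, ∀ s : Finset S,
      Z'.comap (fun x : {y // y ∈ s} => (x : S)) ∈ A s := by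
  obtain ⟨v, hvA, hv⟩ := SimpleGraph.exists_compatible_mem A hne hclosed
  exact ⟨SimpleGraph.glue v, fun s => SimpleGraph.comap_glue_of_compatible hv s ▸ hvA s⟩
end
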